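/- There exist Büchi automata 𝒜, ℬ over Σ = {a,b} with σ(a)=1, σ(b)=2 such that Duplicator wins the two-buffer simulation game with capacities (ω,1) when allowed to consume more than one letter per round, but loses if restricted to consuming at most one letter per round. -/

import Mathlib

open scoped Classical

/-- A Büchi automaton over alphabet `S`. -/
structure BA (S : Type) where
  Q : Type
  init : Q
  trans : Q → S → Q → Prop
  acc : Q → Prop

/-- The Büchi language of `A`: infinite words with a run from the initial state
visiting accepting states infinitely often. -/
def BA.Lang {S : Type} (A : BA S) : Set (ℕ → S) :=
  { w | ∃ ρ : ℕ → A.Q, ρ 0 = A.init ∧ (∀ n, A.trans (ρ n) (w n) (ρ (n+1))) ∧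
        ∀ n, ∃ m, n ≤ m ∧ A.acc (ρ m) }

/-- A configuration of the two-buffer simulation game: Spoiler's state, contents of
the two FIFO buffers (head = oldest letter), Duplicator's state. -/
structure Cfg {S : Type} (A B : BA S) where
  qa : A.Q
  b1 : List S
  b2 : List S
  qb : B.Q

/-- The configuration after Spoiler's move `m = (a, q')`: his state becomes `q'` and
the letter `a` is appended to buffer `σ a` (`true` = buffer 1, `false` = buffer 2). -/
def midCfg {S : Type} {A B : BA S} (σ : S → Bool) (c : Cfg A B) (m : S × A.Q) : Cfg A B :=
  ⟨m.2, if σ m.1 then c.b1 ++ [m.1] else c.b1, if σ m.1 then c.b2 else c.b2 ++ [m.1], c.qb⟩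

/-- Applying a finite sequence of Duplicator consumption steps: each step picks a buffer
(`true` = buffer 1) and a successor state, consuming the oldest letter of that buffer
along a matching transition of `B`.  Returns `none` if some step is illegal. -/
noncomputable def dupApply {S : Type} (A B : BA S) :
    Cfg A B → List (Bool × B.Q) → Option (Cfg A B)
  | c, [] => some c
  | c, (j, p') :: ms =>
    if j then
      match c.b1 with
      | [] => none
      | b :: β => if B.trans c.qb b p' then dupApply A B ⟨c.qa, β, c.b2, p'⟩ ms else none
    else
      match c.b2 with
      | [] => none
      | b :: β => if B.trans c.qb b p' then dupApply A B ⟨c.qa, c.b1, β, p'⟩ ms else none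

/-- The configuration at the start of round `n` (i.e. after Duplicator's moves of
round `n-1`), given Spoiler's moves `sp` and Duplicator's responses `dm`;
`none` once an illegal move has occurred. -/
noncomputable def playCfg {S : Type} (A B : BA S) (σ : S → Bool)
    (sp : ℕ → S × A.Q) (dm : ℕ → List (Bool × B.Q)) : ℕ → Option (Cfg A B)
  | 0 => some ⟨A.init, [], [], B.init⟩
  | n+1 =>
    match playCfg A B σ sp dm n with
    | none => none
    | some c =>
      if A.trans c.qa (sp n).1 (sp n).2 then dupApply A B (midCfg σ c (sp n)) (dm n) else none

/-- Number of letters put into buffer `j` by Spoiler during the first `n` rounds. -/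
noncomputable def pushed {S : Type} {QA : Type} (σ : S → Bool) (sp : ℕ → S × QA)
    (j : Bool) (n : ℕ) : ℕ :=
  ((Finset.range n).filter fun i => σ (sp i).1 = j).card

/-- Number of letters consumed from buffer `j` by Duplicator during the first `n` rounds. -/
noncomputable def consumed {QB : Type} (dm : ℕ → List (Bool × QB)) (j : Bool) (n : ℕ) : ℕ :=
  ∑ i ∈ Finset.range n, ((dm i).filter fun x => x.1 = j).length

/-- Duplicator's strategy is consistent with the moves `dm` of a play. -/
def Consistent {S : Type} (A B : BA S)
    (dstrat : List ((S × A.Q) × List (Bool × B.Q)) → (S × A.Q) → List (Bool × B.Q))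
    (sp : ℕ → S × A.Q) (dm : ℕ → List (Bool × B.Q)) : Prop :=
  ∀ n, dm n = dstrat (List.ofFn fun i : Fin n => (sp i, dm i)) (sp n)

/-- Spoiler's moves are legal as long as the play is defined. -/
def SpLegal {S : Type} (A B : BA S) (σ : S → Bool)
    (sp : ℕ → S × A.Q) (dm : ℕ → List (Bool × B.Q)) : Prop :=
  ∀ n c, playCfg A B σ sp dm n = some c → A.trans c.qa (sp n).1 (sp n).2

/-- Duplicator's winning condition for a play of the two-buffer game with
capacities `(k1, k2)`: the buffers never exceed their capacities (checked after her
moves), and either Spoiler's run visits accepting states only finitely often, or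
every letter put into a buffer is eventually consumed and Duplicator's run visits
accepting states infinitely often. -/
def Win2 {S : Type} (A B : BA S) (σ : S → Bool) (k1 k2 : ℕ∞)
    (sp : ℕ → S × A.Q) (dm : ℕ → List (Bool × B.Q)) : Prop :=
  (∀ n c, playCfg A B σ sp dm n = some c →
      (c.b1.length : ℕ∞) ≤ k1 ∧ (c.b2.length : ℕ∞) ≤ k2) ∧
  ((∃ N, ∀ n, N ≤ n → ¬ A.acc (sp n).2) ∨
    ((∀ n j, ∃ m, pushed σ sp j n ≤ consumed dm j m) ∧
     (∀ n, ∃ m, n ≤ m ∧ ∃ x ∈ dm m, B.acc x.2)))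

/-- `dstrat` is a winning strategy for Duplicator in the two-buffer simulation game on
`A`, `B` with letter distribution `σ` and capacities `(k1, k2)`: against every legal
behaviour of Spoiler, all of Duplicator's prescribed moves are legal (the play never
breaks) and the resulting play is won by Duplicator. -/
def WinningStrat2 {S : Type} (A B : BA S) (σ : S → Bool) (k1 k2 : ℕ∞)
    (dstrat : List ((S × A.Q) × List (Bool × B.Q)) → (S × A.Q) → List (Bool × B.Q)) : Prop :=
  ∀ sp dm, Consistent A B dstrat sp dm → SpLegal A B σ sp dm →
    (∀ n, (playCfg A B σ sp dm n).isSome) ∧ Win2 A B σ k1 k2 sp dm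

/-- Two-buffer simulation `A ⊑(k1,k2) B`: Duplicator has a winning strategy. -/
def Sim2 {S : Type} (A B : BA S) (σ : S → Bool) (k1 k2 : ℕ∞) : Prop :=
  ∃ dstrat, WinningStrat2 A B σ k1 k2 dstrat
/-- Two-buffer game, variant in which Duplicator consumes at most one letter per
round: her move is `none` (skip) or `some (j, p')` (consume the oldest letter of
buffer `j`, moving to `p'`). -/
noncomputable def playCfg2One {S : Type} (A B : BA S) (σ : S → Bool)
    (sp : ℕ → S × A.Q) (dm : ℕ → Option (Bool × B.Q)) : ℕ → Option (Cfg A B)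
  | 0 => some ⟨A.init, [], [], B.init⟩
  | n+1 =>
    match playCfg2One A B σ sp dm n with
    | none => none
    | some c =>
      if A.trans c.qa (sp n).1 (sp n).2 then
        dupApply A B (midCfg σ c (sp n)) (dm n).toList
      else none

/-- Two-buffer simulation with capacities `(k1, k2)` in the variant where Duplicator
may consume at most one letter per round. -/
def Sim2One {S : Type} (A B : BA S) (σ : S → Bool) (k1 k2 : ℕ∞) : Prop :=
  ∃ dstrat : List ((S × A.Q) × Option (Bool × B.Q)) → (S × A.Q) → Option (Bool × B.Q),
    ∀ sp dm, (∀ n, dm n = dstrat (List.ofFn fun i : Fin n => (sp i, dm i)) (sp n)) →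
      (∀ n c, playCfg2One A B σ sp dm n = some c → A.trans c.qa (sp n).1 (sp n).2) →
      (∀ n, (playCfg2One A B σ sp dm n).isSome) ∧
      ((∀ n c, playCfg2One A B σ sp dm n = some c →
          (c.b1.length : ℕ∞) ≤ k1 ∧ (c.b2.length : ℕ∞) ≤ k2) ∧
       ((∃ N, ∀ n, N ≤ n → ¬ A.acc (sp n).2) ∨
         ((∀ n j, ∃ m, pushed σ sp j n ≤ consumed (fun i => (dm i).toList) j m) ∧
          (∀ n, ∃ m, n ≤ m ∧ ∃ x ∈ dm m, B.acc x.2))))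

/-- The alphabet `{a, b}`. -/
inductive L15 | a | b
deriving DecidableEq

/-- `a` goes to (unbounded) buffer 1, `b` to buffer 2 (of capacity 1). -/
def σ15 : L15 → Bool | .a => true | .b => false

/-- The automaton `𝒜`: states `q0, …, q5` with `q4, q5` accepting. -/
def A15 : BA L15 where
  Q := Fin 6
  init := 0
  acc := fun q => q = 4 ∨ q = 5
  trans := fun q x q' =>
    (q = 0 ∧ x = .a ∧ q' = 1) ∨ (q = 1 ∧ x = .a ∧ q' = 2) ∨
    (q = 2 ∧ x = .b ∧ q' = 3) ∨ (q = 3 ∧ x = .b ∧ (q' = 4 ∨ q' = 5)) ∨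
    (q = 4 ∧ x = .a ∧ q' = 4) ∨ (q = 5 ∧ x = .b ∧ q' = 5)

/-- The automaton `ℬ`: states `p0, …, p8` with `p4, p8` accepting. -/
def B15 : BA L15 where
  Q := Fin 9
  init := 0
  acc := fun q => q = 4 ∨ q = 8
  trans := fun q x q' =>
    (q = 0 ∧ x = .a ∧ (q' = 1 ∨ q' = 5)) ∨ (q = 1 ∧ x = .b ∧ q' = 2) ∨
    (q = 2 ∧ x = .a ∧ q' = 3) ∨ (q = 3 ∧ x = .b ∧ q' = 4) ∨ (q = 4 ∧ x = .a ∧ q' = 4) ∨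
    (q = 5 ∧ x = .b ∧ q' = 6) ∨ (q = 6 ∧ x = .a ∧ q' = 7) ∨ (q = 7 ∧ x = .b ∧ q' = 8) ∨
    (q = 8 ∧ x = .b ∧ q' = 8)

/-!
Spoiler's run of `𝒜` reads `aab` and commits only with its fourth letter, to `q4` (then `a^ω`)
or to `q5` (then `b^ω`), whereas a run of `ℬ` commits on its very first letter, to the branch `p1…p4`
(reading `abab a^ω`) or to `p5…p8` (reading `abab b^ω`).

Consuming several letters per round, Duplicator waits: in round 3, after Spoiler's move, the
buffers hold `aa` and `bb`, and she consumes `abab` along the branch that matches Spoiler's choice, then mirrors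
him letter by letter.

Consuming one letter per round, she cannot wait that long. Spoiler watches whether she enters
`p1…p4` during rounds 0–2. If she does, he continues to `q5` and `b^ω`. If she does not, he
continues to `q4` and `a^ω`; buffer 2 (capacity 1) then holds two `b`s after his move in round 3,
so she must have read a `b` by the end of that round, which one round starting from `p0` cannot
achieve: she is on `p5…p8`. Either way she is on the wrong branch. Along `p1…p4` at most two `b`s
are ever read, so buffer 2 overflows; along `p5…p8` at most two `a`s are read, so the `a`s are
never all consumed. Both bounds are potentials on the states of `ℬ` that drop by one with each
letter of the relevant kind.
-/

section TwoBufferGame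

variable {S : Type} {A B : BA S}

def Cfg.buf (c : Cfg A B) : Bool → List S
  | true => c.b1
  | false => c.b2

def Cfg.Sorted (σ : S → Bool) (c : Cfg A B) : Prop :=
  ∀ j, ∀ x ∈ c.buf j, σ x = j

def BA.IsClosed (B : BA S) (T : Set B.Q) : Prop :=
  ∀ p x p', B.trans p x p' → p ∈ T → p' ∈ T

/-- `budget` bounds how many letters of buffer `j` a run of `B` inside `R` can still read. -/
def BA.IsBudget (B : BA S) (σ : S → Bool) (j : Bool) (R : Set B.Q) (budget : B.Q → ℕ) :
    Prop :=
  ∀ p x p', B.trans p x p' → p' ∈ R →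
    p ∈ R ∧ budget p' + (if σ x = j then 1 else 0) ≤ budget p

theorem dupApply_cons_eq_some {c c' : Cfg A B} {j : Bool} {p : B.Q} {ms : List (Bool × B.Q)}
    (h : dupApply A B c ((j, p) :: ms) = some c') :
    ∃ x d, c.buf j = x :: d.buf j ∧ d.buf (!j) = c.buf (!j) ∧ d.qa = c.qa ∧ d.qb = p ∧
      B.trans c.qb x p ∧ dupApply A B d ms = some c' := by
  obtain ⟨qa, b1, b2, qb⟩ := c
  cases j
  · rcases b2 with _ | ⟨x, β⟩
    · simp [dupApply] at h
    · simp only [dupApply, Bool.false_eq_true, ↓reduceIte] at h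
      split_ifs at h with ht
      exact ⟨x, ⟨qa, b1, β, p⟩, rfl, rfl, rfl, rfl, ht, h⟩
  · rcases b1 with _ | ⟨x, β⟩
    · simp [dupApply] at h
    · simp only [dupApply, ↓reduceIte] at h
      split_ifs at h with ht
      exact ⟨x, ⟨qa, β, b2, p⟩, rfl, rfl, rfl, rfl, ht, h⟩

theorem dupApply_nil_eq_some {c c' : Cfg A B} (h : dupApply A B c [] = some c') : c' = c :=
  (Option.some.inj h).symm

theorem qa_dupApply {c c' : Cfg A B} {ms : List (Bool × B.Q)}
    (h : dupApply A B c ms = some c') : c'.qa = c.qa := by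
  induction ms generalizing c with
  | nil => rw [dupApply_nil_eq_some h]
  | cons m ms ih =>
    obtain ⟨x, d, -, -, hqa, -, -, hd⟩ := dupApply_cons_eq_some h
    rw [ih hd, hqa]

theorem Cfg.Sorted.of_consume {σ : S → Bool} {c d : Cfg A B} {j : Bool} {x : S}
    (hc : c.Sorted σ) (hj : c.buf j = x :: d.buf j) (hnj : d.buf (!j) = c.buf (!j)) :
    d.Sorted σ := by
  intro i y hy
  rcases Bool.eq_or_eq_not i j with rfl | rfl
  · exact hc _ y (by rw [hj]; exact List.mem_cons_of_mem x hy)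
  · exact hc _ y (by rwa [← hnj])

theorem Cfg.Sorted.dupApply {σ : S → Bool} {c c' : Cfg A B} {ms : List (Bool × B.Q)}
    (hc : c.Sorted σ) (h : dupApply A B c ms = some c') : c'.Sorted σ := by
  induction ms generalizing c with
  | nil => rwa [dupApply_nil_eq_some h]
  | cons m ms ih =>
    obtain ⟨x, d, hj, hnj, -, -, -, hd⟩ := dupApply_cons_eq_some h
    exact ih (hc.of_consume hj hnj) hd

theorem length_buf_dupApply {c c' : Cfg A B} {ms : List (Bool × B.Q)}
    (h : dupApply A B c ms = some c') (j : Bool) :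
    (c'.buf j).length + (ms.filter fun x => x.1 = j).length = (c.buf j).length := by
  induction ms generalizing c with
  | nil => rw [dupApply_nil_eq_some h]; rfl
  | cons m ms ih =>
    obtain ⟨x, d, hj, hnj, -, -, -, hd⟩ := dupApply_cons_eq_some h
    rcases Bool.eq_or_eq_not j m.1 with rfl | rfl
    · simp [← ih hd, hj, Nat.add_assoc]
    · simp [← ih hd, ← hnj]

theorem qb_dupApply_mem {T : Set B.Q} (hT : B.IsClosed T) {c c' : Cfg A B}
    {ms : List (Bool × B.Q)} (h : dupApply A B c ms = some c')
    (hc : c.qb ∈ T) : c'.qb ∈ T := by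
  induction ms generalizing c with
  | nil => rwa [dupApply_nil_eq_some h]
  | cons m ms ih =>
    obtain ⟨x, d, -, -, -, hqb, ht, hd⟩ := dupApply_cons_eq_some h
    exact ih hd (hqb ▸ hT _ _ _ ht hc)

theorem qb_dupApply_eq_or_mem {c c' : Cfg A B} {ms : List (Bool × B.Q)}
    (h : dupApply A B c ms = some c') : c'.qb = c.qb ∨ ∃ m ∈ ms, c'.qb = m.2 := by
  induction ms generalizing c with
  | nil => left; rw [dupApply_nil_eq_some h]
  | cons m ms ih =>
    obtain ⟨x, d, -, -, -, hqb, -, hd⟩ := dupApply_cons_eq_some h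
    rcases ih hd with h' | ⟨m', hm', h'⟩
    · exact Or.inr ⟨m, List.mem_cons_self .., h'.trans hqb⟩
    · exact Or.inr ⟨m', List.mem_cons_of_mem _ hm', h'⟩

theorem budget_dupApply {σ : S → Bool} {R : Set B.Q} {budget : B.Q → ℕ} {j : Bool}
    (hR : B.IsBudget σ j R budget) {c c' : Cfg A B} {ms : List (Bool × B.Q)} (hc : c.Sorted σ)
    (h : dupApply A B c ms = some c') (hc' : c'.qb ∈ R) :
    c.qb ∈ R ∧ budget c'.qb + (ms.filter fun x => x.1 = j).length ≤ budget c.qb := by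
  induction ms generalizing c with
  | nil => rw [dupApply_nil_eq_some h] at hc' ⊢; simpa using hc'
  | cons m ms ih =>
    obtain ⟨x, d, hj, hnj, -, hqb, ht, hd⟩ := dupApply_cons_eq_some h
    have hσ : σ x = m.1 := hc _ x (by rw [hj]; exact List.mem_cons_self ..)
    obtain ⟨hdR, hd_le⟩ := ih (hc.of_consume hj hnj) hd
    rw [hqb] at hdR hd_le
    obtain ⟨hcR, hstep⟩ := hR _ _ _ ht hdR
    refine ⟨hcR, ?_⟩
    rw [hσ] at hstep
    split_ifs at hstep with hm
    · rw [List.filter_cons_of_pos (by simpa using hm), List.length_cons]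
      omega
    · rw [List.filter_cons_of_neg (by simpa using hm)]
      omega

theorem buf_midCfg (σ : S → Bool) (c : Cfg A B) (m : S × A.Q) (j : Bool) :
    (midCfg σ c m).buf j = if σ m.1 = j then c.buf j ++ [m.1] else c.buf j := by
  cases j <;> cases h : σ m.1 <;> simp [midCfg, Cfg.buf, h]

theorem Cfg.Sorted.midCfg {σ : S → Bool} {c : Cfg A B} (hc : c.Sorted σ) (m : S × A.Q) :
    (midCfg σ c m).Sorted σ := by
  intro j y hy
  rw [buf_midCfg] at hy
  split_ifs at hy with hm
  · rcases List.mem_append.1 hy with hy | hy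
    · exact hc j y hy
    · rw [List.mem_singleton.1 hy, hm]
  · exact hc j y hy

variable {σ : S → Bool} {sp : ℕ → S × A.Q} {dm : ℕ → List (Bool × B.Q)}

theorem playCfg_succ_eq_some {n : ℕ} {c' : Cfg A B} :
    playCfg A B σ sp dm (n + 1) = some c' ↔ ∃ c, playCfg A B σ sp dm n = some c ∧
      A.trans c.qa (sp n).1 (sp n).2 ∧ dupApply A B (midCfg σ c (sp n)) (dm n) = some c' := by
  rw [playCfg]
  rcases playCfg A B σ sp dm n with _ | c
  · simp
  · by_cases ht : A.trans c.qa (sp n).1 (sp n).2 <;> simp [ht]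

theorem playCfg_induction {P : ℕ → Cfg A B → Prop} (h0 : P 0 ⟨A.init, [], [], B.init⟩)
    (hstep : ∀ n c c', playCfg A B σ sp dm n = some c → P n c →
      dupApply A B (midCfg σ c (sp n)) (dm n) = some c' → P (n + 1) c') :
    ∀ n c, playCfg A B σ sp dm n = some c → P n c := by
  intro n
  induction n with
  | zero => intro c h; cases h; exact h0
  | succ n ih =>
    intro c' h
    obtain ⟨c, hc, -, hd⟩ := playCfg_succ_eq_some.1 h
    exact hstep n c c' hc (ih c hc) hd

theorem sorted_of_playCfg {n : ℕ} {c : Cfg A B} (h : playCfg A B σ sp dm n = some c) :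
    c.Sorted σ :=
  playCfg_induction (P := fun _ c => c.Sorted σ)
    (fun j x hx => by cases j <;> simp [Cfg.buf] at hx)
    (fun _ _ _ _ hc hd => (hc.midCfg _).dupApply hd) n c h

theorem qa_of_playCfg_succ {n : ℕ} {c : Cfg A B} (h : playCfg A B σ sp dm (n + 1) = some c) :
    c.qa = (sp n).2 := by
  obtain ⟨c, -, -, hd⟩ := playCfg_succ_eq_some.1 h
  exact qa_dupApply hd

theorem pushed_succ (j : Bool) (n : ℕ) :
    pushed σ sp j (n + 1) = pushed σ sp j n + if σ (sp n).1 = j then 1 else 0 := by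
  by_cases h : σ (sp n).1 = j <;> simp [pushed, Finset.range_add_one, Finset.filter_insert, h]

theorem consumed_succ (j : Bool) (n : ℕ) :
    consumed dm j (n + 1) = consumed dm j n + ((dm n).filter fun x => x.1 = j).length :=
  Finset.sum_range_succ _ n

theorem pushed_mono (j : Bool) : Monotone (pushed σ sp j) := fun _ _ h =>
  Finset.card_le_card (Finset.filter_subset_filter _ (Finset.range_mono h))

theorem consumed_mono (j : Bool) : Monotone (consumed dm j) := fun _ _ h =>
  Finset.sum_le_sum_of_subset (Finset.range_mono h)

theorem length_buf_add_consumed {n : ℕ} {c : Cfg A B} (h : playCfg A B σ sp dm n = some c)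
    (j : Bool) : (c.buf j).length + consumed dm j n = pushed σ sp j n := by
  refine playCfg_induction
    (P := fun n c => (c.buf j).length + consumed dm j n = pushed σ sp j n)
    (by cases j <;> rfl) (fun n c c' _ ih hd => ?_) n c h
  have := length_buf_dupApply hd j
  rw [buf_midCfg] at this
  rw [consumed_succ, pushed_succ, ← ih]
  split_ifs at this ⊢
  · rw [List.length_append, List.length_singleton] at this
    omega
  · omega

theorem consumed_add_budget_le {R : Set B.Q} {budget : B.Q → ℕ} {j : Bool}
    (hR : B.IsBudget σ j R budget) {n : ℕ} {c : Cfg A B}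
    (h : playCfg A B σ sp dm n = some c) (hc : c.qb ∈ R) :
    consumed dm j n + budget c.qb ≤ budget B.init := by
  refine playCfg_induction
    (P := fun n c => c.qb ∈ R → consumed dm j n + budget c.qb ≤ budget B.init)
    (fun _ => by simp [consumed]) (fun n c c' hc ih hd hc' => ?_) n c h hc
  obtain ⟨hcR, hle⟩ := budget_dupApply hR ((sorted_of_playCfg hc).midCfg _) hd hc'
  have := ih hcR
  rw [consumed_succ]
  simp only [midCfg] at hle
  omega

theorem qb_mem_of_playCfg_le {T : Set B.Q} (hT : B.IsClosed T) {n m : ℕ} {c c' : Cfg A B}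
    (h : playCfg A B σ sp dm n = some c) (hc : c.qb ∈ T)
    (hnm : n ≤ m) (h' : playCfg A B σ sp dm m = some c') : c'.qb ∈ T := by
  induction m, hnm using Nat.le_induction generalizing c' with
  | base => rwa [← Option.some.inj (h.symm.trans h')]
  | succ m _ ih =>
    obtain ⟨d, hd, -, hdup⟩ := playCfg_succ_eq_some.1 h'
    exact qb_dupApply_mem hT hdup (ih (c' := d) hd)

theorem qb_not_mem_of_playCfg {T : Set B.Q} (hinit : B.init ∉ T) {n : ℕ}
    (hdm : ∀ k < n, ∀ m ∈ dm k, m.2 ∉ T) {c : Cfg A B}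
    (h : playCfg A B σ sp dm n = some c) :
    c.qb ∉ T := by
  refine playCfg_induction (P := fun n c => (∀ k < n, ∀ m ∈ dm k, m.2 ∉ T) → c.qb ∉ T)
    (fun _ => hinit) (fun n c c' _ ih hd hdm => ?_) n c h hdm
  rcases qb_dupApply_eq_or_mem hd with hq | ⟨m, hm, hq⟩
  · rw [hq]; exact ih fun k hk => hdm k (by omega)
  · rw [hq]; exact hdm n (by omega) m hm

theorem pushed_le_consumed_of_buf_eq_nil {n m : ℕ} {c : Cfg A B} (hnm : n ≤ m)
    (h : playCfg A B σ sp dm m = some c) {j : Bool} (hj : c.buf j = []) :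
    pushed σ sp j n ≤ consumed dm j m := by
  have := length_buf_add_consumed h j
  rw [hj, List.length_nil, zero_add] at this
  exact this ▸ pushed_mono j hnm

theorem qb_dupApply_toList {c c' : Cfg A B} {o : Option (Bool × B.Q)}
    (h : dupApply A B c o.toList = some c') :
    (o = none ∧ c'.qb = c.qb) ∨ ∃ j x, o = some (j, c'.qb) ∧ B.trans c.qb x c'.qb := by
  rcases o with _ | ⟨j, p⟩
  · exact Or.inl ⟨rfl, by rw [dupApply_nil_eq_some h]⟩
  · obtain ⟨x, d, -, -, -, hqb, ht, hd⟩ := dupApply_cons_eq_some h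
    rw [dupApply_nil_eq_some hd, hqb]
    exact Or.inr ⟨j, x, rfl, ht⟩

theorem playCfg2One_eq_playCfg (sp : ℕ → S × A.Q) (dm : ℕ → Option (Bool × B.Q)) :
    playCfg2One A B σ sp dm = playCfg A B σ sp fun i => (dm i).toList := by
  funext n
  induction n with
  | zero => rfl
  | succ n ih => rw [playCfg2One, playCfg, ih]

def BA.IsRun (A : BA S) (sp : ℕ → S × A.Q) : Prop :=
  A.trans A.init (sp 0).1 (sp 0).2 ∧ ∀ n, A.trans (sp n).2 (sp (n + 1)).1 (sp (n + 1)).2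

theorem BA.IsRun.spLegal (hsp : A.IsRun sp) : SpLegal A B σ sp dm := by
  rintro (_ | n) c h
  · cases h
    exact hsp.1
  · rw [qa_of_playCfg_succ h]
    exact hsp.2 n

end TwoBufferGame

section Responses

variable {α β : Type} (D : List (α × β) → α → β)

def responseHistory (sp : ℕ → α) : ℕ → List (α × β)
  | 0 => []
  | n + 1 => responseHistory sp n ++ [(sp n, D (responseHistory sp n) (sp n))]

def responses (sp : ℕ → α) (n : ℕ) : β :=
  D (responseHistory D sp n) (sp n)

theorem responseHistory_eq_ofFn (sp : ℕ → α) (n : ℕ) :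
    responseHistory D sp n = List.ofFn fun i : Fin n => (sp i, responses D sp i) := by
  induction n with
  | zero => rfl
  | succ n ih =>
    rw [List.ofFn_succ_last, responseHistory, ih]
    simp only [Fin.val_castSucc, Fin.val_last]
    rw [responses, ih]

theorem responses_eq (sp : ℕ → α) (n : ℕ) :
    responses D sp n = D (List.ofFn fun i : Fin n => (sp i, responses D sp i)) (sp n) := by
  rw [responses, responseHistory_eq_ofFn]

theorem responseHistory_congr {sp sp' : ℕ → α} {n : ℕ} (h : ∀ i < n, sp i = sp' i) :
    responseHistory D sp n = responseHistory D sp' n := by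
  induction n with
  | zero => rfl
  | succ n ih =>
    rw [responseHistory, responseHistory, ih fun i hi => h i (by omega), h n (by omega)]

theorem responses_congr {sp sp' : ℕ → α} {n : ℕ} (h : ∀ i ≤ n, sp i = sp' i) :
    responses D sp n = responses D sp' n := by
  rw [responses, responses, responseHistory_congr D fun i hi => h i hi.le, h n le_rfl]

end Responses

instance : Fintype L15 where
  elems := {.a, .b}
  complete x := by cases x <;> decide

def leftBranch : Set (Fin 9) := ↑({1, 2, 3, 4} : Finset (Fin 9))

def rightBranch : Set (Fin 9) := ↑({5, 6, 7, 8} : Finset (Fin 9))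

def bBudget : Fin 9 → ℕ := ![2, 2, 1, 1, 0, 0, 0, 0, 0]

def aBudget : Fin 9 → ℕ := ![2, 0, 0, 0, 0, 1, 1, 0, 0]

section Transitions

set_option synthInstance.maxSize 4096

theorem leftBranch_closed : B15.IsClosed leftBranch := by
  delta BA.IsClosed B15 leftBranch; decide

theorem rightBranch_closed : B15.IsClosed rightBranch := by
  delta BA.IsClosed B15 rightBranch; decide

theorem bBudget_isBudget : B15.IsBudget σ15 false rightBranchᶜ bBudget := by
  delta BA.IsBudget B15 rightBranch; decide

theorem aBudget_isBudget : B15.IsBudget σ15 true leftBranchᶜ aBudget := by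
  delta BA.IsBudget B15 leftBranch; decide

theorem rightBranch_subset_compl : rightBranch ⊆ leftBranchᶜ := by
  intro p; delta leftBranch rightBranch; revert p; decide

theorem leftBranch_subset_compl : leftBranch ⊆ rightBranchᶜ := by
  intro p; delta leftBranch rightBranch; revert p; decide

theorem init_not_mem_leftBranch : B15.init ∉ leftBranch := by
  delta B15 leftBranch; decide

theorem bBudget_eq_two_of_uncommitted : ∀ (p : B15.Q) (x : L15) (p' : B15.Q),
    (p' = p ∨ B15.trans p x p') → p ∉ leftBranch → p' ∉ rightBranch →
      bBudget p' = 2 := by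
  delta B15 leftBranch rightBranch; decide

end Transitions

def branchEnd (q : Fin 6) : Fin 9 := if q = 4 then 4 else 8

def dupPlan : ℕ → L15 × Fin 6 → List (Bool × Fin 9)
  | 3, (_, q) => if q = 4 then [(true, 1), (false, 2), (true, 3), (false, 4)]
      else [(true, 5), (false, 6), (true, 7), (false, 8)]
  | _ + 4, (x, q) => [(σ15 x, branchEnd q)]
  | _, _ => []

def planCfg (q : Fin 6) : ℕ → Cfg A15 B15
  | 0 => ⟨(0 : Fin 6), [], [], (0 : Fin 9)⟩
  | 1 => ⟨(1 : Fin 6), [.a], [], (0 : Fin 9)⟩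
  | 2 => ⟨(2 : Fin 6), [.a, .a], [], (0 : Fin 9)⟩
  | 3 => ⟨(3 : Fin 6), [.a, .a], [.b], (0 : Fin 9)⟩
  | _ + 4 => ⟨q, [], [], branchEnd q⟩

theorem planCfg_b2_length_le (q : Fin 6) (n : ℕ) : (planCfg q n).b2.length ≤ 1 := by
  match n with
  | 0 | 1 | 2 | 3 | _ + 4 => simp [planCfg]

theorem branchEnd_acc (q : Fin 6) : B15.acc (branchEnd q) := by
  unfold branchEnd; split_ifs <;> simp [B15]

section DupPlan

variable {sp : ℕ → L15 × A15.Q} {dm : ℕ → List (Bool × B15.Q)}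

theorem playCfg_dupPlan_succ (hdm : ∀ n, dm n = dupPlan n (sp n))
    (hL : SpLegal A15 B15 σ15 sp dm) {n : ℕ} {c c' : Cfg A15 B15}
    (h : playCfg A15 B15 σ15 sp dm n = some c)
    (hD : A15.trans c.qa (sp n).1 (sp n).2 →
      dupApply A15 B15 (midCfg σ15 c (sp n)) (dupPlan n (sp n)) = some c') :
    playCfg A15 B15 σ15 sp dm (n + 1) = some c' :=
  playCfg_succ_eq_some.2 ⟨c, h, hL n c h, hdm n ▸ hD (hL n c h)⟩

theorem playCfg_dupPlan_of_le_three (hdm : ∀ n, dm n = dupPlan n (sp n))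
    (hL : SpLegal A15 B15 σ15 sp dm) (q : Fin 6) {n : ℕ} (hn : n ≤ 3) :
    playCfg A15 B15 σ15 sp dm n = some (planCfg q n) := by
  induction n with
  | zero => rfl
  | succ n ih =>
    refine playCfg_dupPlan_succ hdm hL (ih (by omega)) fun ht => ?_
    have hn : n < 3 := by omega
    interval_cases n <;>
      simp only [A15, planCfg, Fin.isValue, Fin.reduceEq, true_and, false_and, or_false,
        false_or] at ht <;>
      simp [ht, dupPlan, midCfg, σ15, dupApply, planCfg]

theorem playCfg_dupPlan (hdm : ∀ n, dm n = dupPlan n (sp n))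
    (hL : SpLegal A15 B15 σ15 sp dm) :
    ∃ q, ∀ n, playCfg A15 B15 σ15 sp dm n = some (planCfg q n) := by
  obtain ⟨q, hq3⟩ : ∃ q : Fin 6, (sp 3).2 = q := ⟨_, rfl⟩
  have h3 := playCfg_dupPlan_of_le_three hdm hL q le_rfl
  have hq : q = 4 ∨ q = 5 := by
    have h := hL 3 _ h3
    simp only [A15, planCfg, hq3, Fin.isValue, Fin.reduceEq, true_and, false_and, or_false,
      false_or] at h
    exact h.2
  have hloop : ∀ k, playCfg A15 B15 σ15 sp dm (k + 4) = some (planCfg q (k + 4)) := by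
    intro k
    induction k with
    | zero =>
      refine playCfg_dupPlan_succ hdm hL h3 fun ht => ?_
      simp only [A15, planCfg, Fin.isValue, Fin.reduceEq, true_and, false_and, or_false,
        false_or] at ht
      rcases hq with rfl | rfl <;>
        simp [ht.1, hq3, dupPlan, midCfg, σ15, dupApply, planCfg, B15, branchEnd]
    | succ k ih =>
      refine playCfg_dupPlan_succ hdm hL ih fun ht => ?_
      rcases hq with rfl | rfl <;>
        simp only [A15, planCfg, Fin.isValue, Fin.reduceEq, true_and, false_and, or_false,
          false_or] at ht <;>
        simp [ht, dupPlan, midCfg, σ15, dupApply, planCfg, B15, branchEnd]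
  refine ⟨q, fun n => ?_⟩
  rcases Nat.lt_or_ge n 4 with hn | hn
  · exact playCfg_dupPlan_of_le_three hdm hL q (by omega)
  · obtain ⟨k, rfl⟩ := Nat.exists_eq_add_of_le' hn
    exact hloop k

end DupPlan

theorem sim2_A15_B15 : Sim2 A15 B15 σ15 ⊤ 1 := by
  refine ⟨fun h m => dupPlan h.length m, fun sp dm hC hL => ?_⟩
  have hdm : ∀ n, dm n = dupPlan n (sp n) := fun n =>
    (hC n).trans (congrArg (fun k => dupPlan k (sp n)) (List.length_ofFn ..))
  obtain ⟨q, hplay⟩ := playCfg_dupPlan hdm hL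
  refine ⟨fun n => by rw [hplay n]; rfl,
    ⟨fun n c hc => ?_, Or.inr ⟨fun n j => ?_, fun n => ?_⟩⟩⟩
  · rw [hplay n] at hc
    cases hc
    exact ⟨le_top, by exact_mod_cast planCfg_b2_length_le q n⟩
  · exact ⟨n + 4,
      pushed_le_consumed_of_buf_eq_nil (by omega) (hplay (n + 4)) (by cases j <;> rfl)⟩
  · refine ⟨n + 4, by omega, (σ15 (sp (n + 4)).1, branchEnd (sp (n + 4)).2), ?_,
      branchEnd_acc _⟩
    rw [hdm]
    exact List.mem_singleton_self _

def spoilerA : ℕ → L15 × A15.Q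
  | 0 => (.a, (1 : Fin 6))
  | 1 => (.a, (2 : Fin 6))
  | 2 => (.b, (3 : Fin 6))
  | 3 => (.b, (4 : Fin 6))
  | _ + 4 => (.a, (4 : Fin 6))

def spoilerB : ℕ → L15 × A15.Q
  | 0 => (.a, (1 : Fin 6))
  | 1 => (.a, (2 : Fin 6))
  | 2 => (.b, (3 : Fin 6))
  | _ + 3 => (.b, (5 : Fin 6))

theorem spoilerA_isRun : A15.IsRun spoilerA := by
  refine ⟨by simp [A15, spoilerA], fun n => ?_⟩
  match n with
  | 0 | 1 | 2 | 3 | _ + 4 => simp [A15, spoilerA]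

theorem spoilerB_isRun : A15.IsRun spoilerB := by
  refine ⟨by simp [A15, spoilerB], fun n => ?_⟩
  match n with
  | 0 | 1 | 2 | _ + 3 => simp [A15, spoilerB]

section OneLetterPlays

variable {dm : ℕ → Option (Bool × B15.Q)}

theorem buffer_overflow_against_spoilerB
    (hdef : ∀ n, (playCfg A15 B15 σ15 spoilerB (fun i => (dm i).toList) n).isSome)
    (hcap : ∀ n c, playCfg A15 B15 σ15 spoilerB (fun i => (dm i).toList) n = some c →
      c.b2.length ≤ 1)
    {k : ℕ} (hk : k < 3) {j : Bool} {p : B15.Q} (hkp : dm k = some (j, p))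
    (hp : p ∈ leftBranch) : False := by
  obtain ⟨c, hc⟩ := Option.isSome_iff_exists.1 (hdef (k + 1))
  obtain ⟨c6, hc6⟩ := Option.isSome_iff_exists.1 (hdef 6)
  have hcp : c.qb = p := by
    obtain ⟨d, -, -, hd⟩ := playCfg_succ_eq_some.1 hc
    rcases qb_dupApply_toList hd with ⟨h, -⟩ | ⟨j', x, h, -⟩
    · rw [hkp] at h; cases h
    · rw [hkp] at h; cases h; rfl
  have h6 : c6.qb ∈ leftBranch :=
    qb_mem_of_playCfg_le leftBranch_closed hc (hcp ▸ hp) (by omega) hc6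
  have hbudget := consumed_add_budget_le bBudget_isBudget hc6 (leftBranch_subset_compl h6)
  have hlen := length_buf_add_consumed hc6 false
  have hpushed : pushed σ15 spoilerB false 6 = 4 := by decide
  have hinit : bBudget B15.init = 2 := rfl
  have := hcap 6 c6 hc6
  simp only [Cfg.buf] at hlen
  omega

theorem qb_mem_rightBranch_against_spoilerA
    (hcap : ∀ n c, playCfg A15 B15 σ15 spoilerA (fun i => (dm i).toList) n = some c →
      c.b2.length ≤ 1)
    (havoid : ∀ k < 3, ∀ j p, dm k = some (j, p) → p ∉ leftBranch) {c : Cfg A15 B15}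
    (hc : playCfg A15 B15 σ15 spoilerA (fun i => (dm i).toList) 4 = some c) :
    c.qb ∈ rightBranch := by
  obtain ⟨c3, hc3, -, hd⟩ := playCfg_succ_eq_some.1 hc
  have h3 : c3.qb ∉ leftBranch := qb_not_mem_of_playCfg init_not_mem_leftBranch
    (fun k hk m hm => havoid k hk m.1 m.2 (Option.mem_toList.1 hm)) hc3
  by_contra h4
  have hfresh : bBudget c.qb = 2 := by
    rcases qb_dupApply_toList hd with ⟨-, h⟩ | ⟨-, x, -, ht⟩
    · exact bBudget_eq_two_of_uncommitted _ .a _ (Or.inl h) h3 h4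
    · exact bBudget_eq_two_of_uncommitted _ x _ (Or.inr ht) h3 h4
  have hbudget := consumed_add_budget_le bBudget_isBudget hc h4
  have hlen := length_buf_add_consumed hc false
  have hpushed : pushed σ15 spoilerA false 4 = 2 := by decide
  have hinit : bBudget B15.init = 2 := rfl
  have := hcap 4 c hc
  simp only [Cfg.buf] at hlen
  omega

theorem consumed_a_le_two_against_spoilerA
    (hdef : ∀ n, (playCfg A15 B15 σ15 spoilerA (fun i => (dm i).toList) n).isSome)
    (hcap : ∀ n c, playCfg A15 B15 σ15 spoilerA (fun i => (dm i).toList) n = some c →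
      c.b2.length ≤ 1)
    (havoid : ∀ k < 3, ∀ j p, dm k = some (j, p) → p ∉ leftBranch) (m : ℕ) :
    consumed (fun i => (dm i).toList) true m ≤ 2 := by
  obtain ⟨c4, hc4⟩ := Option.isSome_iff_exists.1 (hdef 4)
  obtain ⟨c, hc⟩ := Option.isSome_iff_exists.1 (hdef (max m 4))
  have hR : c.qb ∈ rightBranch := qb_mem_of_playCfg_le rightBranch_closed hc4
    (qb_mem_rightBranch_against_spoilerA hcap havoid hc4) (le_max_right m 4) hc
  have hbudget := consumed_add_budget_le aBudget_isBudget hc (rightBranch_subset_compl hR)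
  have hinit : aBudget B15.init = 2 := rfl
  have := consumed_mono (dm := fun i => (dm i).toList) true (le_max_left m 4)
  omega

end OneLetterPlays

theorem not_sim2One_A15_B15 : ¬ Sim2One A15 B15 σ15 ⊤ 1 := by
  rintro ⟨D, hD⟩
  simp only [playCfg2One_eq_playCfg] at hD
  have hcap {sp} {dm : ℕ → Option (Bool × B15.Q)}
      (h : ∀ n c, playCfg A15 B15 σ15 sp (fun i => (dm i).toList) n = some c →
        (c.b1.length : ℕ∞) ≤ ⊤ ∧ (c.b2.length : ℕ∞) ≤ 1) n c
      (hc : playCfg A15 B15 σ15 sp (fun i => (dm i).toList) n = some c) :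
      c.b2.length ≤ 1 := by
    exact_mod_cast (h n c hc).2
  by_cases hleft : ∃ k < 3, ∃ j p, responses D spoilerA k = some (j, p) ∧ p ∈ leftBranch
  · obtain ⟨hdef, hcapB, -⟩ :=
      hD spoilerB _ (responses_eq D spoilerB) spoilerB_isRun.spLegal
    obtain ⟨k, hk, j, p, hkp, hp⟩ := hleft
    have hAB : ∀ i ≤ k, spoilerA i = spoilerB i := by
      intro i hi
      have : i < 3 := by omega
      interval_cases i <;> rfl
    rw [responses_congr D hAB] at hkp
    exact buffer_overflow_against_spoilerB hdef (hcap hcapB) hk hkp hp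
  · push Not at hleft
    obtain ⟨hdef, hcapA, hwin⟩ :=
      hD spoilerA _ (responses_eq D spoilerA) spoilerA_isRun.spLegal
    rcases hwin with ⟨N, hN⟩ | ⟨hall, -⟩
    · exact hN (N + 4) (by omega) (by simp [spoilerA, A15])
    · obtain ⟨m, hm⟩ := hall 5 true
      have hpushed : pushed σ15 spoilerA true 5 = 3 := by decide
      have := consumed_a_le_two_against_spoilerA hdef (hcap hcapA) hleft m
      omega

/-- On the automata `𝒜`, `ℬ` above, Duplicator wins the two-buffer
game with capacities `(ω, 1)` when she may consume several letters per round, but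
loses when restricted to at most one letter per round. -/
theorem multi_consumption_needed :
    Sim2 A15 B15 σ15 ⊤ 1 ∧ ¬ Sim2One A15 B15 σ15 ⊤ 1 :=
  ⟨sim2_A15_B15, not_sim2One_A15_B15⟩
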